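/- arXiv:0807.1750 — 7 statements merged into one kernel-verified Lean document; each statement's English description precedes it below -/
import Mathlib

section
/- For each k ∈ {1,...,n+1}, the column vector w_k with entries w_{i,k} = (−2)^{i-k} · C(n+1-k, i-k) for i ≥ k (and 0 for i < k) is an eigenvector of the matrix M with eigenvalue −λ_{k-1}, i.e., M·w_k = −λ_{k-1}·w_k. -/
/-!
M is lower bidiagonal, so `M w = -λ_k w` amounts to `w_0 = 0` (unless `k = 0`) and the two-term
recurrence `2 λ_i w_i - λ_{i+1} w_{i+1} = -λ_k w_{i+1}`. Since `λ_k - λ_{i+1} = β (i + 1 - k) / n` and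
`λ_i = β (n - i) / n`, for `w_i = (-2)^{i-k} C(n-k, i-k)` this is the absorption identity
`(j + 1) C(m, j + 1) = (m - j) C(m, j)` with `m = n - k`, `j = i - k`.
-/

/-- λ_k = β(n−k)/n (0-based index k = 0,…,n). -/
noncomputable def lam (n : ℕ) (β : ℝ) (k : ℕ) : ℝ := β * ((n : ℝ) - k) / n

/-- The matrix M: diagonal entries −λ_j, subdiagonal entries 2λ_j, 0 elsewhere. -/
noncomputable def mMat (n : ℕ) (β : ℝ) : Matrix (Fin (n + 1)) (Fin (n + 1)) ℝ :=
  fun i j =>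
    if (i : ℕ) = (j : ℕ) then -lam n β j
    else if (i : ℕ) = (j : ℕ) + 1 then 2 * lam n β j
    else 0

open Matrix

section LowerBidiagonal

variable {R : Type*} [NonUnitalNonAssocSemiring R] {n : ℕ}

def lowerBidiagonal (n : ℕ) (d s : ℕ → R) : Matrix (Fin (n + 1)) (Fin (n + 1)) R :=
  Matrix.of fun i j => if (i : ℕ) = j then d j else if (i : ℕ) = j + 1 then s j else 0

theorem lowerBidiagonal_mulVec_zero (d s v : ℕ → R) :
    (lowerBidiagonal n d s *ᵥ fun j => v j) 0 = d 0 * v 0 := by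
  rw [mulVec, dotProduct, Fin.sum_univ_succ]
  simp [lowerBidiagonal]

theorem lowerBidiagonal_mulVec_succ (d s v : ℕ → R) (i : Fin n) :
    (lowerBidiagonal n d s *ᵥ fun j => v j) i.succ = s i * v i + d (i + 1) * v (i + 1) := by
  rw [mulVec, dotProduct, Fintype.sum_eq_add i.castSucc i.succ Fin.castSucc_lt_succ.ne]
  · simp [lowerBidiagonal]
  · rintro j ⟨hj₁, hj₂⟩
    rw [Ne, Fin.ext_iff] at hj₁ hj₂
    simp only [lowerBidiagonal, of_apply, Fin.val_succ, Fin.val_castSucc] at hj₁ hj₂ ⊢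
    split_ifs <;> first | omega | rw [zero_mul]

theorem lowerBidiagonal_mulVec_eq_smul {d s v : ℕ → R} {μ : R}
    (h₀ : d 0 * v 0 = μ * v 0)
    (hsucc : ∀ i < n, s i * v i + d (i + 1) * v (i + 1) = μ * v (i + 1)) :
    (lowerBidiagonal n d s *ᵥ fun j => v j) = μ • fun j : Fin (n + 1) => v j := by
  funext i
  cases i using Fin.cases with
  | zero => simpa [lowerBidiagonal_mulVec_zero] using h₀
  | succ i => simpa [lowerBidiagonal_mulVec_succ] using hsucc i i.is_lt

end LowerBidiagonal

theorem Nat.cast_choose_succ_mul {R : Type*} [Ring R] (m j : ℕ) :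
    (m.choose (j + 1) : R) * (j + 1) = m.choose j * ((m : R) - j) := by
  rcases le_or_gt j m with h | h
  · rw [← Nat.cast_sub h]
    exact_mod_cast congrArg (Nat.cast : ℕ → R) (Nat.choose_succ_right_eq m j)
  · simp [Nat.choose_eq_zero_of_lt h, Nat.choose_eq_zero_of_lt (h.trans (Nat.lt_succ_self j))]

theorem mMat_eq_lowerBidiagonal (n : ℕ) (β : ℝ) :
    mMat n β = lowerBidiagonal n (fun j => -lam n β j) (fun j => 2 * lam n β j) := rfl

-- Indexed by all of ℕ, so that the recurrence below needs no bounds on the index.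
noncomputable def mMatEigvec (n k : ℕ) (i : ℕ) : ℝ :=
  if k ≤ i then (-2 : ℝ) ^ (i - k) * (n - k).choose (i - k) else 0

theorem mMatEigvec_of_lt {n k i : ℕ} (h : i < k) : mMatEigvec n k i = 0 := if_neg (by omega)

theorem mMatEigvec_self_add (n k j : ℕ) :
    mMatEigvec n k (k + j) = (-2 : ℝ) ^ j * (n - k).choose j := by
  simp [mMatEigvec]

theorem mMatEigvec_recurrence (n : ℕ) (β : ℝ) {k : ℕ} (hk : k ≤ n) (i : ℕ) :
    2 * lam n β i * mMatEigvec n k i - lam n β (i + 1) * mMatEigvec n k (i + 1) =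
      -lam n β k * mMatEigvec n k (i + 1) := by
  obtain hik | hki := lt_or_ge i k
  · rw [mMatEigvec_of_lt hik, mul_zero, zero_sub]
    obtain hik' | rfl := Nat.add_one_le_of_lt hik |>.lt_or_eq
    · simp [mMatEigvec_of_lt hik']
    · rw [neg_mul]
  obtain ⟨j, rfl⟩ := Nat.exists_eq_add_of_le hki
  have hchoose := Nat.cast_choose_succ_mul (R := ℝ) (n - k) j
  rw [Nat.cast_sub hk] at hchoose
  rw [add_assoc, mMatEigvec_self_add, mMatEigvec_self_add]
  unfold lam
  push_cast
  linear_combination (-2 * β * (-2) ^ j / n) * hchoose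

theorem mMat_eigenvector_general (n : ℕ) (β : ℝ) (k : Fin (n + 1)) :
    (mMat n β).mulVec
        (fun i : Fin (n + 1) =>
          if (k : ℕ) ≤ (i : ℕ) then
            (-2 : ℝ) ^ ((i : ℕ) - k) * ((n - (k : ℕ)).choose ((i : ℕ) - k)) else 0)
      = fun i : Fin (n + 1) =>
          -lam n β k *
            (if (k : ℕ) ≤ (i : ℕ) then
              (-2 : ℝ) ^ ((i : ℕ) - k) * ((n - (k : ℕ)).choose ((i : ℕ) - k)) else 0) := by
  change mMat n β *ᵥ (fun i => mMatEigvec n k i) =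
    -lam n β k • fun i : Fin (n + 1) => mMatEigvec n k i
  rw [mMat_eq_lowerBidiagonal]
  refine lowerBidiagonal_mulVec_eq_smul ?_ fun i _ => ?_
  · obtain hk | hk := Nat.eq_zero_or_pos k
    · rw [hk]
    · rw [mMatEigvec_of_lt hk, mul_zero, mul_zero]
  · linear_combination mMatEigvec_recurrence n β k.is_le i

/-- The column w_k with entries (−2)^{i−k}·C(n−k, i−k) (i ≥ k, 0-based) is an
eigenvector of M with eigenvalue −λ_k. -/
theorem mMat_eigenvector (n : ℕ) (β : ℝ) (hβ : 0 < β) (k : Fin (n + 1)) :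
    (mMat n β).mulVec
        (fun i : Fin (n + 1) =>
          if (k : ℕ) ≤ (i : ℕ) then
            (-2 : ℝ) ^ ((i : ℕ) - k) * ((n - (k : ℕ)).choose ((i : ℕ) - k)) else 0)
      = fun i : Fin (n + 1) =>
          -lam n β k *
            (if (k : ℕ) ≤ (i : ℕ) then
              (-2 : ℝ) ^ ((i : ℕ) - k) * ((n - (k : ℕ)).choose ((i : ℕ) - k)) else 0) :=
  mMat_eigenvector_general n β k
end

section
/- The matrix M admits the diagonalization M = A(−2) · D · A(2), where D = diag(−λ_0, −λ_1, ..., −λ_n). -/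
def aMat (n : ℕ) (γ : ℝ) : Matrix (Fin (n + 1)) (Fin (n + 1)) ℝ :=
  fun i k => if (k : ℕ) ≤ (i : ℕ) then γ ^ ((i : ℕ) - k) * ((n - (k : ℕ)).choose ((i : ℕ) - k)) else 0

/-!
Read `aMat n γ` as the matrix, in the basis `xᵏ yⁿ⁻ᵏ` of binary forms of degree `n`, of the
substitution `y ↦ y + γ x`; hence `A(γ) A(δ) = A(γ + δ)` and `A(0) = 1`. In the same basis `M` is
the operator `(β / n) (2x − y) ∂_y` and `D` is `−(β / n) y ∂_y`, and the substitution `y ↦ y + 2x`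
turns the first into the second, i.e. `A(2) M = D A(2)`. Entrywise this is the identity
`(n − j) C(n − j − 1, i − j − 1) = (i − j) C(n − j, i − j)`.
-/

open Finset Matrix

def aEntry (n : ℕ) (γ : ℝ) (i k : ℕ) : ℝ :=
  if k ≤ i then γ ^ (i - k) * ((n - k).choose (i - k)) else 0

lemma aMat_apply (n : ℕ) (γ : ℝ) (i k : Fin (n + 1)) : aMat n γ i k = aEntry n γ i k := rfl

lemma aEntry_of_lt (n : ℕ) (γ : ℝ) {i k : ℕ} (h : i < k) : aEntry n γ i k = 0 :=
  if_neg (by omega)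

lemma aEntry_add_left (n : ℕ) (γ : ℝ) (j m : ℕ) :
    aEntry n γ (j + m) j = γ ^ m * (n - j).choose m := by
  simp [aEntry]

lemma aEntry_succ_right (γ : ℝ) {n i : ℕ} (j : ℕ) (hi : i ≤ n) :
    γ * ((n : ℝ) - j) * aEntry n γ i (j + 1) = ((i : ℝ) - j) * aEntry n γ i j := by
  rcases lt_or_ge j i with hji | hij
  · obtain ⟨m, rfl⟩ := Nat.exists_eq_add_of_lt hji
    have hnext : aEntry n γ (j + m + 1) (j + 1) = γ ^ m * (n - (j + 1)).choose m := by
      rw [show j + m + 1 = j + 1 + m by ring, aEntry_add_left]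
    rw [hnext, add_assoc, aEntry_add_left]
    obtain ⟨l, rfl⟩ := Nat.exists_eq_add_of_le hi
    rw [show j + m + 1 + l - (j + 1) = m + l by omega, show j + m + 1 + l - j = m + l + 1 by omega]
    have hchoose := Nat.add_one_mul_choose_eq (m + l) m
    rw [← Nat.cast_inj (R := ℝ)] at hchoose
    push_cast at hchoose ⊢
    linear_combination γ ^ (m + 1) * hchoose
  · rw [aEntry_of_lt n γ (by omega : i < j + 1), mul_zero]
    rcases hij.eq_or_lt with rfl | hlt
    · ring
    · rw [aEntry_of_lt n γ hlt, mul_zero]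

lemma sum_aEntry_mul_aEntry (n : ℕ) (γ δ : ℝ) {i : ℕ} (j : ℕ) (hi : i ≤ n) :
    ∑ k ∈ range (n + 1), aEntry n γ i k * aEntry n δ k j = aEntry n (γ + δ) i j := by
  have hsupport : ∑ k ∈ range (n + 1), aEntry n γ i k * aEntry n δ k j =
      ∑ k ∈ Ico j (i + 1), aEntry n γ i k * aEntry n δ k j := by
    refine (sum_subset (fun k hk => ?_) fun k _ hk => ?_).symm
    · simp only [mem_Ico, mem_range] at hk ⊢
      omega
    · simp only [mem_Ico, not_and_or, not_le, not_lt] at hk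
      rcases hk with hk | hk
      · rw [aEntry_of_lt n δ hk, mul_zero]
      · rw [aEntry_of_lt n γ (by omega : i < k), zero_mul]
  rw [hsupport]
  rcases le_or_gt j i with hji | hij
  · obtain ⟨m, rfl⟩ := Nat.exists_eq_add_of_le hji
    rw [sum_Ico_eq_sum_range, show j + m + 1 - j = m + 1 by omega, aEntry_add_left, add_comm γ,
      add_pow, sum_mul]
    refine sum_congr rfl fun s hs => ?_
    obtain ⟨t, rfl⟩ := Nat.exists_eq_add_of_le (Nat.lt_succ_iff.mp (mem_range.mp hs))
    have hγ : aEntry n γ (j + (s + t)) (j + s) = γ ^ t * (n - j - s).choose t := by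
      rw [← add_assoc, aEntry_add_left, Nat.sub_sub]
    rw [hγ, aEntry_add_left, Nat.add_sub_cancel_left]
    have hchoose := Nat.choose_mul (n := n - j) (Nat.le_add_right s t)
    rw [Nat.add_sub_cancel_left, ← Nat.cast_inj (R := ℝ)] at hchoose
    push_cast at hchoose
    linear_combination (-(δ ^ s * γ ^ t)) * hchoose
  · rw [Ico_eq_empty (by omega), sum_empty, aEntry_of_lt n _ hij]

theorem aMat_mul_aMat (n : ℕ) (γ δ : ℝ) : aMat n γ * aMat n δ = aMat n (γ + δ) := by
  ext i j
  simp only [mul_apply, aMat_apply]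
  rw [Fin.sum_univ_eq_sum_range (fun k => aEntry n γ i k * aEntry n δ k j)]
  exact sum_aEntry_mul_aEntry n γ δ j i.is_le

theorem aMat_zero (n : ℕ) : aMat n 0 = 1 := by
  ext i j
  rw [aMat_apply, one_apply, aEntry]
  split_ifs with hji hij hij
  · simp [hij]
  · rw [zero_pow (by omega), zero_mul]
  · omega
  · rfl

lemma mMat_apply (n : ℕ) (β : ℝ) (k j : Fin (n + 1)) :
    mMat n β k j = (if (k : ℕ) = j then -lam n β j else 0) +
      (if (k : ℕ) = j + 1 then 2 * lam n β j else 0) := by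
  simp only [mMat]
  split_ifs <;> first | omega | ring

theorem aMat_two_mul_mMat (n : ℕ) (β : ℝ) :
    aMat n 2 * mMat n β = diagonal (fun k : Fin (n + 1) => -lam n β k) * aMat n 2 := by
  ext i j
  have hcolumn : (aMat n 2 * mMat n β) i j =
      -lam n β j * aEntry n 2 i j + 2 * lam n β j * aEntry n 2 i (j + 1) := by
    simp only [mul_apply, aMat_apply, mMat_apply]
    rw [Fin.sum_univ_eq_sum_range (fun k => aEntry n 2 i k * ((if k = j then -lam n β j else 0) +
      (if k = j + 1 then 2 * lam n β j else 0)))]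
    simp only [mul_add, mul_ite, mul_zero, sum_add_distrib, sum_ite_eq', mem_range]
    rw [if_pos j.is_lt]
    split_ifs with hj
    · ring
    · rw [aEntry_of_lt n 2 (by omega : (i : ℕ) < j + 1)]
      ring
  rw [hcolumn, diagonal_mul, aMat_apply]
  simp only [lam]
  linear_combination (β / n) * aEntry_succ_right 2 (j : ℕ) i.is_le

theorem mMat_diagonalization_general (n : ℕ) (β : ℝ) :
    mMat n β =
      aMat n (-2) * Matrix.diagonal (fun k : Fin (n + 1) => -lam n β k) * aMat n 2 := by
  have hinv : aMat n (-2) * aMat n 2 = 1 := by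
    rw [aMat_mul_aMat, neg_add_cancel, aMat_zero]
  calc mMat n β = aMat n (-2) * aMat n 2 * mMat n β := by rw [hinv, Matrix.one_mul]
    _ = aMat n (-2) * (aMat n 2 * mMat n β) := Matrix.mul_assoc _ _ _
    _ = _ := by rw [aMat_two_mul_mMat, Matrix.mul_assoc]

/-- Diagonalization M = A(−2)·D·A(2) with D = diag(−λ_0, …, −λ_n). -/
theorem mMat_diagonalization (n : ℕ) (β : ℝ) (hβ : 0 < β) :
    mMat n β =
      aMat n (-2) * Matrix.diagonal (fun k : Fin (n + 1) => -lam n β k) * aMat n 2 :=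
  mMat_diagonalization_general n β
end

section
/- The unique solution x(t) of the linear ODE system x'(t) = M·x(t) with initial condition x(0) = (1, 0, ..., 0) satisfies x(t) = A(−2) · exp(tD) · A(2) · (1,0,...,0)ᵀ, where exp(tD) = diag(e^{−λ_0 t}, ..., e^{−λ_n t}). -/
/-!
The matrices `A(γ)` form a one-parameter group, `A(γ) A(δ) = A(γ + δ)`, by the binomial
theorem and the identity `C(m, a) C(a, r) = C(m, r) C(m - r, a - r)`; in particular
`A(-2)⁻¹ = A(2)`. The columns of `A(-2)` are eigenvectors of `M`: `M A(-2) = A(-2) D`, which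
reduces to the recurrence `C(m, r + 1) (r + 1) = C(m, r) (m - r)` between neighbouring entries
of a column. Hence `t ↦ A(-2) e^{tD} A(2) e₀` solves `x' = M x` with value `e₀` at `0`, and a
linear ODE has a unique solution for given initial value.
-/

open Finset Matrix

theorem sum_pow_mul_choose_mul_pow_mul_choose {R : Type*} [CommSemiring R] (γ δ : R)
    (m a : ℕ) :
    ∑ r ∈ range (a + 1), γ ^ (a - r) * ((m - r).choose (a - r) : R) * (δ ^ r * m.choose r) =
      (γ + δ) ^ a * m.choose a := by
  rw [add_comm γ δ, add_pow, sum_mul]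
  refine sum_congr rfl fun r hr => ?_
  have hchoose : (m.choose a : R) * a.choose r = m.choose r * (m - r).choose (a - r) := by
    rw [← Nat.cast_mul, ← Nat.cast_mul, Nat.choose_mul (Nat.lt_succ_iff.mp (mem_range.mp hr))]
  calc γ ^ (a - r) * ((m - r).choose (a - r) : R) * (δ ^ r * m.choose r)
      = δ ^ r * γ ^ (a - r) * (m.choose r * (m - r).choose (a - r)) := by ring
    _ = δ ^ r * γ ^ (a - r) * a.choose r * m.choose a := by rw [← hchoose]; ring

theorem Fin.sum_univ_eq_sum_range_of_support {M : Type*} [AddCommMonoid M] (g : ℕ → M)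
    {n i j : ℕ} (hji : j ≤ i) (hi : i ≤ n) (hg : ∀ k, k < j ∨ i < k → g k = 0) :
    ∑ k : Fin (n + 1), g k = ∑ r ∈ range (i - j + 1), g (j + r) := by
  rw [Fin.sum_univ_eq_sum_range g, ← sum_subset (s₁ := Ico j (i + 1)), sum_Ico_eq_sum_range,
    show i + 1 - j = i - j + 1 by omega]
  · intro k hk
    simp only [mem_Ico, mem_range] at hk ⊢
    omega
  · intro k _ hk
    simp only [mem_Ico, not_and_or, not_le, not_lt] at hk
    exact hg k (by omega)

theorem mMat_mul_apply_zero (n : ℕ) (β : ℝ) (B : Matrix (Fin (n + 1)) (Fin (n + 1)) ℝ)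
    (k : Fin (n + 1)) : (mMat n β * B) 0 k = -lam n β 0 * B 0 k := by
  rw [Matrix.mul_apply, Fintype.sum_eq_single 0]
  · simp [mMat]
  · intro j hj
    have hj' : (j : ℕ) ≠ 0 := Fin.val_ne_of_ne hj
    simp [mMat, Ne.symm hj']

theorem mMat_mul_apply_succ (n : ℕ) (β : ℝ) (B : Matrix (Fin (n + 1)) (Fin (n + 1)) ℝ)
    (w : Fin n) (k : Fin (n + 1)) :
    (mMat n β * B) w.succ k =
      2 * lam n β w * B w.castSucc k - lam n β (w + 1) * B w.succ k := by
  rw [Matrix.mul_apply, Fintype.sum_eq_add w.castSucc w.succ Fin.castSucc_lt_succ.ne]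
  · have hsub : mMat n β w.succ w.castSucc = 2 * lam n β w := by simp [mMat]
    have hdiag : mMat n β w.succ w.succ = -lam n β (w + 1) := by simp [mMat]
    rw [hsub, hdiag]
    ring
  · rintro j ⟨hj₁, hj₂⟩
    have hj₁' : (w : ℕ) ≠ j := fun h => hj₁ (Fin.ext h.symm)
    have hj₂' : (w : ℕ) + 1 ≠ j := fun h => hj₂ (Fin.ext h.symm)
    simp [mMat, hj₁', hj₂']

theorem aMat_succ_apply (n : ℕ) (γ : ℝ) (w : Fin n) (k : Fin (n + 1)) :
    (((w : ℕ) : ℝ) + 1 - (k : ℕ)) * aMat n γ w.succ k =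
      γ * ((n : ℝ) - (w : ℕ)) * aMat n γ w.castSucc k := by
  simp only [aMat, Fin.val_succ, Fin.val_castSucc]
  rcases lt_trichotomy (k : ℕ) (w + 1) with hlt | heq | hgt
  · have hkw : (k : ℕ) ≤ w := by omega
    have hwn : (w : ℕ) ≤ n := by omega
    have hchoose := Nat.choose_succ_right_eq (n - k) (w - k)
    rw [show n - k - (w - k) = n - w by omega] at hchoose
    have hchooseℝ := congrArg (Nat.cast : ℕ → ℝ) hchoose
    push_cast [Nat.cast_sub hkw, Nat.cast_sub hwn] at hchooseℝ
    rw [if_pos hkw, if_pos hlt.le, show (w : ℕ) + 1 - k = w - k + 1 by omega, pow_succ]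
    linear_combination γ ^ ((w : ℕ) - k) * γ * hchooseℝ
  · simp [heq]
  · rw [if_neg (by omega), if_neg (by omega)]
    ring

theorem mMat_mul_aMat_neg_two (n : ℕ) (β : ℝ) :
    mMat n β * aMat n (-2) = aMat n (-2) * diagonal (fun k : Fin (n + 1) => -lam n β k) := by
  ext i k
  rw [Matrix.mul_diagonal]
  induction i using Fin.cases with
  | zero =>
    rw [mMat_mul_apply_zero]
    rcases eq_or_ne k 0 with rfl | hk
    · rw [Fin.val_zero, mul_comm]
    · have hk' : ¬ (k : ℕ) ≤ 0 := fun h => hk (Fin.ext (Nat.le_zero.mp h))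
      simp [aMat, hk']
  | succ w =>
    rw [mMat_mul_apply_succ]
    have hrec := aMat_succ_apply n (-2) w k
    simp only [lam]
    push_cast
    linear_combination (β / n) * hrec

section LinearODE

variable {ι : Type*} [Fintype ι]

theorem Matrix.eq_of_hasDerivAt_mulVec (M : Matrix ι ι ℝ) {x y : ℝ → ι → ℝ}
    (hx : ∀ t, HasDerivAt x (M *ᵥ x t) t) (hy : ∀ t, HasDerivAt y (M *ᵥ y t) t)
    (h₀ : x 0 = y 0) : x = y :=
  ODE_solution_unique_univ (v := fun _ => M.mulVecLin.toContinuousLinearMap)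
    (s := fun _ => Set.univ) (fun _ => M.mulVecLin.toContinuousLinearMap.lipschitz.lipschitzOnWith)
    (fun t => ⟨hx t, Set.mem_univ _⟩) (fun t => ⟨hy t, Set.mem_univ _⟩) h₀

variable [DecidableEq ι]

theorem Matrix.hasDerivAt_mul_exp_diagonal_mul_mulVec {M P : Matrix ι ι ℝ} {d : ι → ℝ}
    (h : M * P = P * diagonal d) (Q : Matrix ι ι ℝ) (v : ι → ℝ) (t : ℝ) :
    HasDerivAt (fun s => (P * diagonal (fun k => Real.exp (d k * s)) * Q) *ᵥ v)
      (M *ᵥ ((P * diagonal (fun k => Real.exp (d k * t)) * Q) *ᵥ v)) t := by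
  let u : ℝ → ι → ℝ := fun s k => Real.exp (d k * s) * (Q *ᵥ v) k
  have hfactor : ∀ s, (P * diagonal (fun k => Real.exp (d k * s)) * Q) *ᵥ v = P *ᵥ u s := by
    intro s
    rw [Matrix.mul_assoc, ← mulVec_mulVec, ← mulVec_mulVec]
    congr 1
    ext k
    exact mulVec_diagonal _ _ _
  have hu : HasDerivAt u (diagonal d *ᵥ u t) t := by
    refine hasDerivAt_pi.2 fun k => ?_
    rw [mulVec_diagonal]
    exact (((hasDerivAt_id' t).const_mul (d k)).exp.mul_const ((Q *ᵥ v) k)).congr_deriv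
      (by ring)
  simp only [hfactor, mulVec_mulVec, h]
  rw [← mulVec_mulVec]
  exact (P.mulVecLin.toContinuousLinearMap).hasFDerivAt.comp_hasDerivAt t hu

end LinearODE

theorem ode_solution_general (n : ℕ) (β : ℝ)
    (x : ℝ → Fin (n + 1) → ℝ)
    (hderiv : ∀ (t : ℝ) (i : Fin (n + 1)),
      HasDerivAt (fun s => x s i) ((mMat n β).mulVec (x t) i) t)
    (hinit : x 0 = fun i : Fin (n + 1) => if i = 0 then 1 else 0) :
    ∀ t : ℝ, x t =
      (aMat n (-2) *
        Matrix.diagonal (fun k : Fin (n + 1) => Real.exp (-lam n β k * t)) *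
        aMat n 2).mulVec (fun i : Fin (n + 1) => if i = 0 then 1 else 0) := by
  have hinv : aMat n (-2) * aMat n 2 = 1 := by
    rw [aMat_mul_aMat, neg_add_cancel, aMat_zero]
  refine congrFun (Matrix.eq_of_hasDerivAt_mulVec (mMat n β) (fun t => hasDerivAt_pi.2 (hderiv t))
    (Matrix.hasDerivAt_mul_exp_diagonal_mul_mulVec (mMat_mul_aMat_neg_two n β) (aMat n 2) _) ?_)
  simp only [hinit, mul_zero, Real.exp_zero, Matrix.diagonal_one, Matrix.mul_one, hinv,
    Matrix.one_mulVec]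

/-- Any solution of x' = M x with x(0) = (1,0,…,0) equals
A(−2)·exp(tD)·A(2)·(1,0,…,0)ᵀ, where exp(tD) = diag(e^{−λ_0 t},…,e^{−λ_n t}). -/
theorem ode_solution (n : ℕ) (β : ℝ) (hβ : 0 < β)
    (x : ℝ → Fin (n + 1) → ℝ)
    (hderiv : ∀ (t : ℝ) (i : Fin (n + 1)),
      HasDerivAt (fun s => x s i) ((mMat n β).mulVec (x t) i) t)
    (hinit : x 0 = fun i : Fin (n + 1) => if i = 0 then 1 else 0) :
    ∀ t : ℝ, x t =
      (aMat n (-2) *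
        Matrix.diagonal (fun k : Fin (n + 1) => Real.exp (-lam n β k * t)) *
        aMat n 2).mulVec (fun i : Fin (n + 1) => if i = 0 then 1 else 0) :=
  ode_solution_general n β x hderiv hinit
end

section
/- The functions x_k(t) defined recursively by x_0(t) = e^{−λ_0 t} and x_k'(t) = 2λ_{k-1}x_{k-1}(t) − λ_k x_k(t) with x_k(0) = 0 for k ≥ 1 satisfy the identity Σ_{k=0}^{n} x_k(t) = (2 − e^{−βt/n})^n for all t ≥ 0. -/
open Real Finset

theorem eq_of_hasDerivAt_sub_mul {f g b : ℝ → ℝ} {a : ℝ}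
    (hf : ∀ t, HasDerivAt f (b t - a * f t) t) (hg : ∀ t, HasDerivAt g (b t - a * g t) t)
    (h0 : f 0 = g 0) : f = g := by
  have hconst : ∀ t, HasDerivAt (fun s => (f s - g s) * exp (a * s)) 0 t := fun t => by
    have hexp : HasDerivAt (fun s => exp (a * s)) (exp (a * t) * a) t :=
      ((hasDerivAt_id t).const_mul a).exp.congr_deriv (by simp)
    exact ((hf t).sub (hg t)).mul hexp |>.congr_deriv (by simp only [Pi.sub_apply]; ring)
  funext t
  have h := is_const_of_deriv_eq_zero (fun s => (hconst s).differentiableAt)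
    (fun s => (hconst s).deriv) t 0
  simpa [h0, sub_eq_zero] using h

theorem cast_choose_mul_sub (n k : ℕ) :
    (n.choose k : ℝ) * (n - k) = n.choose (k + 1) * (k + 1) := by
  rcases le_or_gt k n with hk | hk
  · have h := congrArg (Nat.cast : ℕ → ℝ) (Nat.choose_succ_right_eq n k)
    push_cast [Nat.cast_sub hk] at h
    exact h.symm
  · simp [Nat.choose_eq_zero_of_lt hk, Nat.choose_eq_zero_of_lt (Nat.lt_succ_of_lt hk)]

noncomputable def lamSolution (n : ℕ) (β : ℝ) (k : ℕ) (t : ℝ) : ℝ :=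
  n.choose k * exp (-lam n β k * t) * (2 - 2 * exp (-β * t / n)) ^ k

theorem lamSolution_zero (n : ℕ) (β t : ℝ) : lamSolution n β 0 t = exp (-lam n β 0 * t) := by
  simp [lamSolution]

theorem lamSolution_succ_at_zero (n : ℕ) (β : ℝ) (k : ℕ) : lamSolution n β (k + 1) 0 = 0 := by
  simp [lamSolution]

theorem exp_neg_lam_mul (n : ℕ) (β : ℝ) (k : ℕ) (t : ℝ) :
    exp (-lam n β k * t) = exp (-lam n β (k + 1) * t) * exp (-β * t / n) := by
  rw [← exp_add]
  congr 1
  simp only [lam]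
  push_cast
  ring

theorem hasDerivAt_lamSolution_succ (n : ℕ) (β : ℝ) (k : ℕ) (t : ℝ) :
    HasDerivAt (lamSolution n β (k + 1))
      (2 * lam n β k * lamSolution n β k t - lam n β (k + 1) * lamSolution n β (k + 1) t) t := by
  have hE : HasDerivAt (fun s => exp (-β * s / n)) (exp (-β * t / n) * (-β / n)) t :=
    (((hasDerivAt_id t).const_mul (-β)).div_const n).exp.congr_deriv (by simp)
  have hA : HasDerivAt (fun s => exp (-lam n β (k + 1) * s))
      (exp (-lam n β (k + 1) * t) * -lam n β (k + 1)) t :=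
    ((hasDerivAt_id t).const_mul _).exp.congr_deriv (by simp)
  have hP := ((hE.const_mul 2).const_sub 2).pow (k + 1)
  refine ((hA.const_mul (n.choose (k + 1) : ℝ)).mul hP).congr_deriv ?_
  simp only [lamSolution, exp_neg_lam_mul n β k t, Pi.pow_apply, Nat.add_sub_cancel, pow_succ,
    Nat.cast_succ]
  have hlam : lam n β k = (n - k) * (β / n) := by simp only [lam]; ring
  rw [hlam]
  linear_combination (-2 * (β / n) * exp (-lam n β (k + 1) * t) * exp (-β * t / n) *
    (2 - 2 * exp (-β * t / n)) ^ k) * cast_choose_mul_sub n k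

theorem eq_lamSolution {n : ℕ} {β : ℝ} {x : ℕ → ℝ → ℝ}
    (hx0 : ∀ t : ℝ, x 0 t = exp (-(lam n β 0) * t))
    (hderiv : ∀ k, 1 ≤ k → k ≤ n → ∀ t : ℝ,
      HasDerivAt (x k) (2 * lam n β (k - 1) * x (k - 1) t - lam n β k * x k t) t)
    (hinit : ∀ k, 1 ≤ k → k ≤ n → x k 0 = 0) :
    ∀ k ≤ n, x k = lamSolution n β k := by
  intro k
  induction k with
  | zero => exact fun _ => funext fun t => by rw [hx0, lamSolution_zero]
  | succ k ih =>
    intro hk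
    have hprev := ih (Nat.le_of_succ_le hk)
    refine eq_of_hasDerivAt_sub_mul (fun t => ?_) (hasDerivAt_lamSolution_succ n β k)
      (by rw [hinit _ k.succ_pos hk, lamSolution_succ_at_zero])
    simpa [hprev] using hderiv (k + 1) k.succ_pos hk t

theorem exp_neg_lam_mul_eq_pow {n k : ℕ} (hk : k ≤ n) (β t : ℝ) :
    exp (-lam n β k * t) = exp (-β * t / n) ^ (n - k) := by
  rw [← exp_nat_mul, Nat.cast_sub hk]
  congr 1
  simp only [lam]
  ring

theorem sum_lamSolution (n : ℕ) (β t : ℝ) :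
    ∑ k ∈ range (n + 1), lamSolution n β k t = (2 - exp (-β * t / n)) ^ n := by
  set E := exp (-β * t / n)
  have hterm : ∀ k ∈ range (n + 1),
      lamSolution n β k t = (2 - 2 * E) ^ k * E ^ (n - k) * n.choose k := fun k hk => by
    rw [lamSolution, exp_neg_lam_mul_eq_pow (Nat.lt_succ_iff.mp (mem_range.mp hk))]
    ring
  rw [sum_congr rfl hterm, ← add_pow]
  ring

theorem sum_solution_general (n : ℕ) (β : ℝ)
    (x : ℕ → ℝ → ℝ)
    (hx0 : ∀ t : ℝ, x 0 t = Real.exp (-(lam n β 0) * t))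
    (hderiv : ∀ k, 1 ≤ k → k ≤ n → ∀ t : ℝ,
      HasDerivAt (x k) (2 * lam n β (k - 1) * x (k - 1) t - lam n β k * x k t) t)
    (hinit : ∀ k, 1 ≤ k → k ≤ n → x k 0 = 0) :
    ∀ t : ℝ, 0 ≤ t →
      ∑ k ∈ Finset.range (n + 1), x k t = (2 - Real.exp (-β * t / n)) ^ n := by
  intro t _
  rw [← sum_lamSolution n β t]
  exact sum_congr rfl fun k hk =>
    congrFun (eq_lamSolution hx0 hderiv hinit k (Nat.lt_succ_iff.mp (mem_range.mp hk))) t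

/-- With x_0(t) = e^{−λ_0 t} and x_k' = 2λ_{k−1}x_{k−1} − λ_k x_k, x_k(0)=0 (k ≥ 1),
one has Σ_{k=0}^n x_k(t) = (2 − e^{−βt/n})^n for t ≥ 0. -/
theorem sum_solution (n : ℕ) (hn : 1 ≤ n) (β : ℝ) (hβ : 0 < β)
    (x : ℕ → ℝ → ℝ)
    (hx0 : ∀ t : ℝ, x 0 t = Real.exp (-(lam n β 0) * t))
    (hderiv : ∀ k, 1 ≤ k → k ≤ n → ∀ t : ℝ,
      HasDerivAt (x k) (2 * lam n β (k - 1) * x (k - 1) t - lam n β k * x k t) t)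
    (hinit : ∀ k, 1 ≤ k → k ≤ n → x k 0 = 0) :
    ∀ t : ℝ, 0 ≤ t →
      ∑ k ∈ Finset.range (n + 1), x k t = (2 - Real.exp (-β * t / n)) ^ n :=
  sum_solution_general n β x hx0 hderiv hinit
end

section
/- The weighted sum Σ_{k=0}^{n} (n−k) x_k(t) equals n·(2 − e^{−βt/n})^{n−1}·e^{−βt/n} for all t ≥ 0. -/
/-! The system is linear and triangular, so it has a unique solution, and the solution is read
off the generating function `ψ(u,t) = (u q + 2(1 - q))^n`, `q = e^{-βt/n}`: `x_k(t)` is the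
coefficient of `u^(n-k)`. The weighted sum `Σ (n-k) x_k` is then `∂ψ/∂u` at `u = 1`, that is
`n q (2 - q)^(n-1)`. -/

open Finset

theorem sum_range_sub_mul_choose_mul_pow {R : Type*} [CommRing R] (a b : R) (n : ℕ) :
    ∑ k ∈ range (n + 1), ((n : R) - k) * n.choose k * a ^ (n - k) * b ^ k
      = n * a * (a + b) ^ (n - 1) := by
  cases n with
  | zero => simp
  | succ m =>
    have hterm : ∀ k ∈ range (m + 1),
        ((m + 1 : ℕ) - (k : R)) * (m + 1).choose k * a ^ (m + 1 - k) * b ^ k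
          = (m + 1 : ℕ) * a * (b ^ k * a ^ (m - k) * m.choose k) := by
      intro k hk
      have hkm : k ≤ m := mem_range_succ_iff.mp hk
      have hchoose : (m.choose k : R) * (m + 1 : ℕ) = (m + 1).choose k * ((m + 1 : ℕ) - k) := by
        rw [← Nat.cast_sub (by omega), ← Nat.cast_mul, ← Nat.cast_mul, Nat.choose_mul_succ_eq]
      rw [Nat.sub_add_comm hkm, pow_succ]
      linear_combination (-(a ^ (m - k) * a * b ^ k)) * hchoose
    rw [sum_range_succ, sub_self, zero_mul, zero_mul, zero_mul, add_zero, sum_congr rfl hterm,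
      ← mul_sum, add_comm a b, add_pow, Nat.add_sub_cancel]

theorem eq_of_hasDerivAt_sub_smul {E : Type*} [NormedAddCommGroup E] [NormedSpace ℝ E]
    {f g r : ℝ → E} {c t₀ : ℝ}
    (hf : ∀ t, HasDerivAt f (r t - c • f t) t) (hg : ∀ t, HasDerivAt g (r t - c • g t) t)
    (h : f t₀ = g t₀) : f = g :=
  have hlip (t : ℝ) : LipschitzWith ‖c‖₊ (fun y => r t - c • y) :=
    LipschitzWith.of_dist_le_mul fun y z => le_of_eq <| by
      rw [dist_eq_norm, dist_eq_norm, coe_nnnorm, ← norm_smul, ← norm_neg, smul_sub]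
      congr 1; abel
  ODE_solution_unique_univ (s := fun _ => Set.univ) (fun t => (hlip t).lipschitzOnWith)
    (fun t => ⟨hf t, trivial⟩) (fun t => ⟨hg t, trivial⟩) h

/-- `x_k(t) = C(n,k) e^{-λ_k t} (2(1 - e^{-βt/n}))^k` is the coefficient of `u^(n-k)` in
`ψ(u,t) = (u e^{-βt/n} + 2(1 - e^{-βt/n}))^n`, since `e^{-λ_k t} = (e^{-βt/n})^(n-k)`. -/
noncomputable def psiCoeff (n : ℕ) (β : ℝ) (k : ℕ) (t : ℝ) : ℝ :=
  n.choose k * Real.exp (-lam n β k * t) * (2 * (1 - Real.exp (-β * t / n))) ^ k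

theorem hasDerivAt_psiCoeff (n : ℕ) (β : ℝ) (k : ℕ) (t : ℝ) :
    HasDerivAt (psiCoeff n β k)
      (n.choose k * k * (2 * (1 - Real.exp (-β * t / n))) ^ (k - 1) * 2 * (β / n)
          * Real.exp (-lam n β k * t) * Real.exp (-β * t / n)
        - lam n β k * psiCoeff n β k t) t := by
  have hexp (c : ℝ) : HasDerivAt (fun s => Real.exp (c * s)) (c * Real.exp (c * t)) t := by
    simpa [mul_comm] using ((hasDerivAt_id t).const_mul c).exp
  have hq :
      HasDerivAt (fun s => Real.exp (-β * s / n)) (-(β / n) * Real.exp (-β * t / n)) t := by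
    simpa [mul_div_right_comm, neg_div] using hexp (-β / n)
  have := (((hexp (-lam n β k)).const_mul (n.choose k : ℝ)).mul
    (((hq.const_sub 1).const_mul 2).pow k))
  refine this.congr_deriv ?_
  simp only [psiCoeff, Pi.pow_apply]
  ring

theorem hasDerivAt_psiCoeff_zero (n : ℕ) (β : ℝ) (t : ℝ) :
    HasDerivAt (psiCoeff n β 0) (-lam n β 0 * psiCoeff n β 0 t) t :=
  (hasDerivAt_psiCoeff n β 0 t).congr_deriv (by simp)

theorem hasDerivAt_psiCoeff_succ (n : ℕ) (β : ℝ) {j : ℕ} (hj : j < n) (t : ℝ) :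
    HasDerivAt (psiCoeff n β (j + 1))
      (2 * lam n β j * psiCoeff n β j t - lam n β (j + 1) * psiCoeff n β (j + 1) t) t := by
  refine (hasDerivAt_psiCoeff n β (j + 1) t).congr_deriv ?_
  have hchoose : (n.choose (j + 1) : ℝ) * (j + 1) = n.choose j * (n - j) := by
    rw [← Nat.cast_sub hj.le]
    exact_mod_cast Nat.choose_succ_right_eq n j
  have hexp : Real.exp (-lam n β (j + 1) * t) * Real.exp (-β * t / n)
      = Real.exp (-lam n β j * t) := by
    rw [← Real.exp_add, lam, lam]; push_cast; ring_nf
  rw [Nat.add_sub_cancel, mul_assoc _ (Real.exp _), hexp]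
  simp only [psiCoeff]
  generalize Real.exp (-lam n β j * t) = e
  generalize Real.exp (-lam n β (j + 1) * t) = e'
  simp only [lam]
  push_cast
  linear_combination (2 * (β / n) * (2 * (1 - Real.exp (-β * t / n))) ^ j * e) * hchoose

theorem psiCoeff_eq (n : ℕ) (β : ℝ) {k : ℕ} (hk : k ≤ n) (t : ℝ) :
    psiCoeff n β k t = n.choose k * Real.exp (-β * t / n) ^ (n - k)
      * (2 * (1 - Real.exp (-β * t / n))) ^ k := by
  rw [psiCoeff, ← Real.exp_nat_mul, lam, Nat.cast_sub (R := ℝ) hk]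
  ring_nf

theorem sum_sub_mul_psiCoeff (n : ℕ) (β t : ℝ) :
    ∑ k ∈ range (n + 1), ((n : ℝ) - k) * psiCoeff n β k t
      = n * (2 - Real.exp (-β * t / n)) ^ (n - 1) * Real.exp (-β * t / n) := by
  rw [sum_congr rfl fun k hk => by
      rw [psiCoeff_eq n β (mem_range_succ_iff.mp hk), ← mul_assoc, ← mul_assoc],
    sum_range_sub_mul_choose_mul_pow]
  ring

theorem weighted_sum_general (n : ℕ) (β : ℝ)
    (x : ℕ → ℝ → ℝ)
    (hderiv0 : ∀ t : ℝ, HasDerivAt (x 0) (-(lam n β 0) * x 0 t) t)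
    (hinit0 : x 0 0 = 1)
    (hderiv : ∀ k, 1 ≤ k → k ≤ n → ∀ t : ℝ,
      HasDerivAt (x k) (2 * lam n β (k - 1) * x (k - 1) t - lam n β k * x k t) t)
    (hinit : ∀ k, 1 ≤ k → k ≤ n → x k 0 = 0) :
    ∀ t : ℝ, 0 ≤ t →
      ∑ k ∈ Finset.range (n + 1), ((n : ℝ) - k) * x k t
        = n * (2 - Real.exp (-β * t / n)) ^ (n - 1) * Real.exp (-β * t / n) := by
  have hx : ∀ k ≤ n, x k = psiCoeff n β k := by
    intro k hk
    induction k with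
    | zero =>
      refine eq_of_hasDerivAt_sub_smul (r := 0) (c := lam n β 0) (t₀ := 0)
        (fun t => (hderiv0 t).congr_deriv ?_)
        (fun t => (hasDerivAt_psiCoeff_zero n β t).congr_deriv ?_) ?_ <;>
      simp [hinit0, psiCoeff]
    | succ j ih =>
      have hj : x j = psiCoeff n β j := ih (by omega)
      refine eq_of_hasDerivAt_sub_smul (t₀ := 0) (hderiv (j + 1) (by omega) hk)
        (fun t => hj ▸ hasDerivAt_psiCoeff_succ n β hk t) ?_
      simp [hinit (j + 1) (by omega) hk, psiCoeff]
  intro t _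
  rw [sum_congr rfl fun k hk => by rw [hx k (mem_range_succ_iff.mp hk)], sum_sub_mul_psiCoeff]

/-- Σ_{k=0}^n (n−k) x_k(t) = n·(2 − e^{−βt/n})^{n−1}·e^{−βt/n}. -/
theorem weighted_sum (n : ℕ) (hn : 1 ≤ n) (β : ℝ) (hβ : 0 < β)
    (x : ℕ → ℝ → ℝ)
    (hderiv0 : ∀ t : ℝ, HasDerivAt (x 0) (-(lam n β 0) * x 0 t) t)
    (hinit0 : x 0 0 = 1)
    (hderiv : ∀ k, 1 ≤ k → k ≤ n → ∀ t : ℝ,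
      HasDerivAt (x k) (2 * lam n β (k - 1) * x (k - 1) t - lam n β k * x k t) t)
    (hinit : ∀ k, 1 ≤ k → k ≤ n → x k 0 = 0) :
    ∀ t : ℝ, 0 ≤ t →
      ∑ k ∈ Finset.range (n + 1), ((n : ℝ) - k) * x k t
        = n * (2 - Real.exp (-β * t / n)) ^ (n - 1) * Real.exp (-β * t / n) :=
  weighted_sum_general n β x hderiv0 hinit0 hderiv hinit
end

section
/- Let t*_n be the unique positive solution of (1 − e^{−βt/n}/2)^n = 1/2. Then t*_n − (n/β)·ln(n/ln 4) converges to (ln 2)/(2β) as n → ∞. -/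
open Real Filter Topology

/-!
Taking n-th roots, e^{-βt*_n/n} = 2(1 - 2^{-1/n}); with x = -(ln 2)/n this rewrites
t*_n - (n/β) ln(n / ln 4) as (ln 2 / β) · ln((eˣ - 1)/x) / x.
Since (eˣ - 1)/x = 1 + x/2 + O(x²) and ln y ~ y - 1 at y = 1, the latter quotient tends
to 1/2 as x → 0.
-/

lemma abs_exp_sub_one_sub_id_sub_sq_div_two_le {x : ℝ} (hx : |x| ≤ 1) :
    |exp x - 1 - x - x ^ 2 / 2| ≤ |x| ^ 3 := by
  have h := Real.exp_bound hx (n := 3) (by norm_num)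
  simp only [Finset.sum_range_succ, Finset.sum_range_zero] at h
  norm_num [Nat.factorial] at h
  calc |exp x - 1 - x - x ^ 2 / 2| = |exp x - (1 + x + x ^ 2 / 2)| := by ring_nf
    _ ≤ |x| ^ 3 * (2 / 9) := h
    _ ≤ |x| ^ 3 := by nlinarith [pow_nonneg (abs_nonneg x) 3]

lemma tendsto_exp_sub_one_sub_id_div_sq :
    Tendsto (fun x => (exp x - 1 - x) / x ^ 2) (𝓝[≠] 0) (𝓝 (1 / 2)) := by
  rw [tendsto_iff_norm_sub_tendsto_zero]
  refine squeeze_zero' (Eventually.of_forall fun _ => norm_nonneg _) ?_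
    (tendsto_nhdsWithin_of_tendsto_nhds (continuous_abs.tendsto' 0 0 abs_zero))
  filter_upwards [self_mem_nhdsWithin,
    nhdsWithin_le_nhds (Icc_mem_nhds (by norm_num : (-1 : ℝ) < 0) one_pos)]
    with x (hx0 : x ≠ 0) hx1
  have hsub : (exp x - 1 - x) / x ^ 2 - 1 / 2 = (exp x - 1 - x - x ^ 2 / 2) / x ^ 2 := by
    field_simp
  rw [Real.norm_eq_abs, hsub, abs_div, abs_pow, div_le_iff₀ (by positivity)]
  calc _ ≤ |x| ^ 3 := abs_exp_sub_one_sub_id_sub_sq_div_two_le (abs_le.mpr hx1)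
    _ = |x| * |x| ^ 2 := by ring

lemma tendsto_log_div_sub_one_nhdsNE_one :
    Tendsto (fun y => log y / (y - 1)) (𝓝[≠] 1) (𝓝 1) := by
  refine (inv_one (G := ℝ) ▸ hasDerivAt_iff_tendsto_slope.mp (hasDerivAt_log one_ne_zero)).congr
    fun y => ?_
  rw [slope_def_field, log_one, sub_zero]

lemma tendsto_exp_sub_one_div_self_nhdsNE_one :
    Tendsto (fun x => (exp x - 1) / x) (𝓝[≠] 0) (𝓝[≠] 1) := by
  refine tendsto_nhdsWithin_iff.mpr
    ⟨?_, eventually_nhdsWithin_of_forall fun x (hx : x ≠ 0) => ?_⟩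
  · refine (exp_zero ▸ hasDerivAt_iff_tendsto_slope.mp (hasDerivAt_exp 0)).congr fun x => ?_
    rw [slope_def_field, exp_zero, sub_zero]
  · rw [Set.mem_compl_singleton_iff, ne_eq, div_eq_one_iff_eq hx]
    linarith [add_one_lt_exp hx]

lemma tendsto_log_exp_sub_one_div_self_div_self :
    Tendsto (fun x => log ((exp x - 1) / x) / x) (𝓝[≠] 0) (𝓝 (1 / 2)) := by
  have := (tendsto_log_div_sub_one_nhdsNE_one.comp tendsto_exp_sub_one_div_self_nhdsNE_one).mul
    tendsto_exp_sub_one_sub_id_div_sq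
  rw [one_mul] at this
  refine this.congr' (eventually_nhdsWithin_of_forall fun x (hx : x ≠ 0) => ?_)
  have : exp x - 1 - x ≠ 0 := by linarith [add_one_lt_exp hx]
  simp only [Function.comp_apply]
  field_simp

lemma eq_exp_neg_log_two_div_of_pow_eq_half {b : ℝ} {n : ℕ} (hb : 0 ≤ b) (hn : n ≠ 0)
    (h : b ^ n = 1 / 2) : b = exp (-log 2 / n) := by
  refine (pow_left_inj₀ hb (exp_pos _).le hn).mp ?_
  rw [h, ← exp_nat_mul, mul_div_cancel₀ _ (Nat.cast_ne_zero.mpr hn), exp_neg, exp_log two_pos,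
    one_div]

lemma sub_mul_log_div_log_four_eq_of_pow_eq_half {β s : ℝ} {n : ℕ} (hβ : 0 < β) (hs : 0 < s)
    (hn : n ≠ 0) (h : (1 - exp (-β * s / n) / 2) ^ n = 1 / 2) :
    s - (n / β) * log (n / log 4) =
      log 2 / β * (log ((exp (-log 2 / n) - 1) / (-log 2 / n)) / (-log 2 / n)) := by
  have hn' : (0 : ℝ) < n := Nat.cast_pos.mpr (Nat.pos_of_ne_zero hn)
  have hlog2 : 0 < log 2 := log_pos one_lt_two
  have hexp_lt : exp (-β * s / n) < 1 :=
    exp_lt_one_iff.mpr (div_neg_of_neg_of_pos (by nlinarith) hn')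
  have hbase := eq_exp_neg_log_two_div_of_pow_eq_half (by linarith) hn h
  have hlt : exp (-log 2 / n) < 1 :=
    exp_lt_one_iff.mpr (div_neg_of_neg_of_pos (by linarith) hn')
  have hs_eq : -β * s / n = log (2 * (1 - exp (-log 2 / n))) := by
    rw [← log_exp (-β * s / n)]; congr 1; linarith
  have hlog4 : log 4 = 2 * log 2 := by
    rw [show (4 : ℝ) = 2 ^ 2 by norm_num, log_pow]; push_cast; ring
  have hsplit : log ((exp (-log 2 / n) - 1) / (-log 2 / n)) =
      log (2 * (1 - exp (-log 2 / n))) + log (n / log 4) := by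
    rw [← log_mul (by nlinarith) (by positivity), hlog4]
    congr 1
    field_simp
    ring
  rw [hsplit, ← hs_eq]
  field_simp
  ring

/-- If t*_n solves (1 − e^{−βt/n}/2)^n = 1/2, then
t*_n − (n/β)·ln(n/ln 4) → (ln 2)/(2β) as n → ∞. -/
theorem half_time_asymptotics (β : ℝ) (hβ : 0 < β) (t : ℕ → ℝ)
    (ht : ∀ n : ℕ, 2 ≤ n →
      0 < t n ∧ (1 - Real.exp (-β * t n / n) / 2) ^ n = 1 / 2) :
    Filter.Tendsto
      (fun n : ℕ => t n - (n / β) * Real.log (n / Real.log 4))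
      Filter.atTop (nhds (Real.log 2 / (2 * β))) := by
  have hlog2 : 0 < log 2 := log_pos one_lt_two
  have hx : Tendsto (fun n : ℕ => -log 2 / n) atTop (𝓝[≠] 0) :=
    tendsto_nhdsWithin_of_tendsto_nhds_of_eventually_within _
      (tendsto_const_div_atTop_nhds_zero_nat _)
      (eventually_ne_atTop 0 |>.mono fun n hn => div_ne_zero (by linarith) (by exact_mod_cast hn))
  have hlim := (tendsto_log_exp_sub_one_div_self_div_self.comp hx).const_mul (log 2 / β)
  rw [show log 2 / β * (1 / 2) = log 2 / (2 * β) by field_simp] at hlim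
  refine hlim.congr' ((eventually_ge_atTop 2).mono fun n hn => ?_)
  obtain ⟨hpos, heq⟩ := ht n hn
  exact (sub_mul_log_div_log_four_eq_of_pow_eq_half hβ hpos (by omega) heq).symm
end

section
/- The solution x_k(t) of the branching ODE system is given explicitly by x_k(t) = 2^k · C(n,k) · e^{−β t (n−k)/n} · (1 − e^{−βt/n})^k for k = 0,...,n and t ≥ 0. -/
theorem eq_of_hasDerivAt_mul_add {c : ℝ} {g y z : ℝ → ℝ}
    (hy : ∀ t, HasDerivAt y (c * y t + g t) t) (hz : ∀ t, HasDerivAt z (c * z t + g t) t)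
    (h0 : y 0 = z 0) : y = z := by
  -- the integrating factor `exp (-c t)` makes `(y - z) exp (-c t)` constant
  set w : ℝ → ℝ := fun u => (y u - z u) * Real.exp (-c * u)
  have hw : ∀ t, HasDerivAt w 0 t := fun t => by
    have he : HasDerivAt (fun u => Real.exp (-c * u)) (Real.exp (-c * t) * -c) t := by
      simpa using ((hasDerivAt_id t).const_mul (-c)).exp
    exact (((hy t).sub (hz t)).mul he).congr_deriv (by simp only [Pi.sub_apply]; ring)
  funext t
  have hwt : w t = w 0 :=
    is_const_of_deriv_eq_zero (fun s => (hw s).differentiableAt) (fun s => (hw s).deriv) t 0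
  simp only [w, h0, sub_self, zero_mul, mul_eq_zero, Real.exp_ne_zero, or_false] at hwt
  exact sub_eq_zero.mp hwt

theorem Nat.cast_choose_succ_mul_succ (n k : ℕ) :
    ((n.choose (k + 1) : ℕ) : ℝ) * (k + 1) = (n.choose k : ℝ) * (n - k) := by
  rcases le_or_gt k n with hk | hk
  · have h := congrArg (Nat.cast (R := ℝ)) (Nat.choose_succ_right_eq n k)
    push_cast [Nat.cast_sub hk] at h
    exact h
  · simp [Nat.choose_eq_zero_of_lt hk, Nat.choose_eq_zero_of_lt (Nat.lt_succ_of_lt hk)]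

noncomputable def branchingSolution (n : ℕ) (β : ℝ) (k : ℕ) (t : ℝ) : ℝ :=
  2 ^ k * (n.choose k) * Real.exp (-β * t * ((n : ℝ) - k) / n) * (1 - Real.exp (-β * t / n)) ^ k

theorem branchingSolution_eq (n : ℕ) (β : ℝ) (k : ℕ) (t : ℝ) :
    branchingSolution n β k t =
      2 ^ k * (n.choose k) * Real.exp (-lam n β k * t) * (1 - Real.exp (-(β / n) * t)) ^ k := by
  unfold branchingSolution lam
  ring_nf

theorem branchingSolution_zero_left (n : ℕ) (β t : ℝ) :
    branchingSolution n β 0 t = Real.exp (-lam n β 0 * t) := by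
  simp [branchingSolution_eq]

theorem branchingSolution_succ_zero (n : ℕ) (β : ℝ) (k : ℕ) :
    branchingSolution n β (k + 1) 0 = 0 := by
  simp [branchingSolution]

theorem lam_eq_lam_succ_add (n : ℕ) (β : ℝ) (k : ℕ) : lam n β k = lam n β (k + 1) + β / n := by
  unfold lam
  push_cast
  ring

theorem hasDerivAt_branchingSolution_zero (n : ℕ) (β t : ℝ) :
    HasDerivAt (branchingSolution n β 0) (-lam n β 0 * branchingSolution n β 0 t) t := by
  have h : branchingSolution n β 0 = fun u => Real.exp (-lam n β 0 * u) :=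
    funext (branchingSolution_zero_left n β)
  rw [h]
  simpa [mul_comm] using ((hasDerivAt_id t).const_mul (-lam n β 0)).exp

theorem hasDerivAt_branchingSolution_succ (n : ℕ) (β : ℝ) (k : ℕ) (t : ℝ) :
    HasDerivAt (branchingSolution n β (k + 1))
      (2 * lam n β k * branchingSolution n β k t -
        lam n β (k + 1) * branchingSolution n β (k + 1) t) t := by
  have hexp : ∀ (c : ℝ), HasDerivAt (fun u => Real.exp (c * u)) (c * Real.exp (c * t)) t :=
    fun c => by simpa [mul_comm] using ((hasDerivAt_id t).const_mul c).exp
  have h := (((hexp (-lam n β (k + 1))).const_mul (2 ^ (k + 1) * (n.choose (k + 1) : ℝ))).mul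
    (((hasDerivAt_const t 1).sub (hexp (-(β / n)))).pow (k + 1)))
  rw [branchingSolution_eq n β k t, funext (branchingSolution_eq n β (k + 1))]
  refine h.congr_deriv ?_
  have hsplit : Real.exp (-lam n β k * t) =
      Real.exp (-lam n β (k + 1) * t) * Real.exp (-(β / n) * t) := by
    rw [← Real.exp_add, lam_eq_lam_succ_add]
    ring_nf
  have hchoose := Nat.cast_choose_succ_mul_succ n k
  simp only [Pi.sub_apply, Pi.pow_apply, Nat.add_sub_cancel]
  rw [hsplit, lam_eq_lam_succ_add n β k]
  unfold lam
  push_cast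
  linear_combination (2 ^ (k + 1) * (β / n) * Real.exp (-(β * (n - (k + 1)) / n) * t) *
    Real.exp (-(β / n) * t) * (1 - Real.exp (-(β / n) * t)) ^ k) * hchoose

theorem explicit_solution_general (n : ℕ) (β : ℝ)
    (x : ℕ → ℝ → ℝ)
    (hderiv0 : ∀ t : ℝ, HasDerivAt (x 0) (-(lam n β 0) * x 0 t) t)
    (hinit0 : x 0 0 = 1)
    (hderiv : ∀ k, 1 ≤ k → k ≤ n → ∀ t : ℝ,
      HasDerivAt (x k) (2 * lam n β (k - 1) * x (k - 1) t - lam n β k * x k t) t)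
    (hinit : ∀ k, 1 ≤ k → k ≤ n → x k 0 = 0) :
    ∀ k, k ≤ n → ∀ t : ℝ, 0 ≤ t →
      x k t = 2 ^ k * (n.choose k) * Real.exp (-β * t * ((n : ℝ) - k) / n) *
        (1 - Real.exp (-β * t / n)) ^ k := by
  have hx : ∀ k ≤ n, x k = branchingSolution n β k := by
    intro k
    induction k with
    | zero =>
      refine fun _ => eq_of_hasDerivAt_mul_add (c := -lam n β 0) (g := 0)
        (fun t => (hderiv0 t).congr_deriv (by simp))
        (fun t => (hasDerivAt_branchingSolution_zero n β t).congr_deriv (by simp)) ?_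
      simp [hinit0, branchingSolution_zero_left]
    | succ k ih =>
      intro hk
      refine eq_of_hasDerivAt_mul_add (c := -lam n β (k + 1))
        (g := fun t => 2 * lam n β k * branchingSolution n β k t) (fun t => ?_) (fun t => ?_) ?_
      · exact (hderiv (k + 1) (by omega) hk t).congr_deriv
          (by rw [Nat.add_sub_cancel, ih (by omega)]; ring)
      · exact (hasDerivAt_branchingSolution_succ n β k t).congr_deriv (by ring)
      · rw [hinit (k + 1) (by omega) hk, branchingSolution_succ_zero]
  intro k hk t _
  rw [hx k hk]
  rfl

/-- Explicit solution: x_k(t) = 2^k·C(n,k)·e^{−βt(n−k)/n}·(1 − e^{−βt/n})^k. -/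
theorem explicit_solution (n : ℕ) (hn : 1 ≤ n) (β : ℝ) (hβ : 0 < β)
    (x : ℕ → ℝ → ℝ)
    (hderiv0 : ∀ t : ℝ, HasDerivAt (x 0) (-(lam n β 0) * x 0 t) t)
    (hinit0 : x 0 0 = 1)
    (hderiv : ∀ k, 1 ≤ k → k ≤ n → ∀ t : ℝ,
      HasDerivAt (x k) (2 * lam n β (k - 1) * x (k - 1) t - lam n β k * x k t) t)
    (hinit : ∀ k, 1 ≤ k → k ≤ n → x k 0 = 0) :
    ∀ k, k ≤ n → ∀ t : ℝ, 0 ≤ t →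
      x k t = 2 ^ k * (n.choose k) * Real.exp (-β * t * ((n : ℝ) - k) / n) *
        (1 - Real.exp (-β * t / n)) ^ k :=
  explicit_solution_general n β x hderiv0 hinit0 hderiv hinit
end
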